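/- arXiv:2109.00204 — 3 statements merged into one kernel-verified Lean document; each statement's English description precedes it below -/
import Mathlib

section
/- The orthogonal complement 𝔥^⊥ = {ξ ∈ 𝔤 : B(ξ, η) = 0 for all η ∈ 𝔥} is exactly the set of pairs (Y, Z) ∈ 𝔤 for which there exist A, C ∈ 𝔰𝔭(W) and B₀ ∈ End(W) such that Y = −(A + C) and Z(u₁, u₂) = (A u₁ + B₀ u₂, −B₀⋆ u₁ + C u₂) for all (u₁, u₂) ∈ W ⊕ W. (Computation of 𝔥^⊥ in Appendix B of the paper.) -/
/-!
In block form `Z = [[Z₁₁, Z₁₂], [Z₂₁, Z₂₂]]` one has `tr (Z ∘ (T ⊕ T)) = tr ((Z₁₁ + Z₂₂) ∘ T)`, so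
`(Y, Z) ⊥ 𝔥` says that `Y + Z₁₁ + Z₂₂ ∈ 𝔰𝔭(W)` is trace-orthogonal to `𝔰𝔭(W)`. The trace form is
nondegenerate on `𝔰𝔭(W)` (test against `x ↦ ω x u • v + ω x v • u`), hence `Y = -(Z₁₁ + Z₂₂)`;
the remaining conditions are just `Z ∈ 𝔰𝔭(W ⊕ W)` read off block by block.
-/

open LinearMap

namespace LinearMap

theorem prod_apply_eq_blocks {R M N P Q : Type*} [Semiring R] [AddCommMonoid M] [Module R M]
    [AddCommMonoid N] [Module R N] [AddCommMonoid P] [Module R P] [AddCommMonoid Q] [Module R Q]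
    (F : M × N →ₗ[R] P × Q) (x : M) (y : N) :
    F (x, y) = ((fst R P Q ∘ₗ F ∘ₗ inl R M N) x + (fst R P Q ∘ₗ F ∘ₗ inr R M N) y,
      (snd R P Q ∘ₗ F ∘ₗ inl R M N) x + (snd R P Q ∘ₗ F ∘ₗ inr R M N) y) := by
  simp only [coe_comp, Function.comp_apply, inl_apply, inr_apply, fst_apply, snd_apply]
  rw [← Prod.fst_add, ← Prod.snd_add, ← map_add, Prod.mk_add_mk, add_zero, zero_add]

section Trace

variable {R M N : Type*} [CommRing R]
  [AddCommGroup M] [Module R M] [Module.Free R M] [Module.Finite R M]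
  [AddCommGroup N] [Module R N] [Module.Free R N] [Module.Finite R N]

theorem trace_prod_eq_add (F : M × N →ₗ[R] M × N) :
    trace R (M × N) F =
      trace R M (fst R M N ∘ₗ F ∘ₗ inl R M N) + trace R N (snd R M N ∘ₗ F ∘ₗ inr R M N) := by
  have hF : F = inl R M N ∘ₗ (fst R M N ∘ₗ F) + inr R M N ∘ₗ (snd R M N ∘ₗ F) := by
    ext <;> simp
  conv_lhs => rw [hF]
  rw [map_add, trace_comp_comm', trace_comp_comm' (snd R M N ∘ₗ F), comp_assoc, comp_assoc]

theorem trace_comp_prodMap_self (Z : M × M →ₗ[R] M × M) (T : M →ₗ[R] M) :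
    trace R (M × M) (Z ∘ₗ T.prodMap T) =
      trace R M ((fst R M M ∘ₗ Z ∘ₗ inl R M M + snd R M M ∘ₗ Z ∘ₗ inr R M M) ∘ₗ T) := by
  rw [trace_prod_eq_add, add_comp, map_add]
  congr 2 <;> ext <;> simp

end Trace

section Symplectic

variable {K W : Type*} [Field K] [NeZero (2 : K)] [AddCommGroup W] [Module K W]
  [FiniteDimensional K W] {ω : W →ₗ[K] W →ₗ[K] K}

theorem eq_zero_of_forall_trace_comp_eq_zero (hω : ω.IsAlt) (hsep : ω.SeparatingLeft)
    {S : W →ₗ[K] W} (hS : ∀ u w : W, ω (S u) w + ω u (S w) = 0)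
    (h : ∀ T : W →ₗ[K] W, (∀ u w : W, ω (T u) w + ω u (T w) = 0) → trace K W (S ∘ₗ T) = 0) :
    S = 0 := by
  ext u
  refine hsep (S u) fun v => ?_
  -- For this `T`, `tr (S ∘ T) = ω (S v) u + ω (S u) v = 2 ω (S u) v`.
  let T : W →ₗ[K] W := (ω.flip u).smulRight v + (ω.flip v).smulRight u
  have hT : ∀ a b : W, ω (T a) b + ω a (T b) = 0 := fun a b => by
    simp only [T, add_apply, smulRight_apply, flip_apply, map_add, map_smul, smul_apply,
      smul_eq_mul, ← hω.neg v b, ← hω.neg u b]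
    ring
  have hST : S ∘ₗ T = (ω.flip u).smulRight (S v) + (ω.flip v).smulRight (S u) := by
    ext; simp [T]
  have htr : ω (S v) u + ω (S u) v = 0 := by
    simpa [hST] using h T hT
  have hsymm : ω (S v) u = ω (S u) v := by
    linear_combination hS v u + hω.neg v (S u)
  have h2 : (2 : K) * ω (S u) v = 0 := by linear_combination htr - hsymm
  simpa [NeZero.ne (2 : K)] using h2

end Symplectic

end LinearMap

/-- computation of `𝔥^⊥` inside `𝔤 = 𝔰𝔭(W) × 𝔰𝔭(W ⊕ W)`, where `𝔥` is the
diagonal copy of `𝔰𝔭(W)` embedded by `T ↦ (T, T ⊕ T)` and the form on `𝔤` is the trace form.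
A pair `(Y, Z) ∈ 𝔤` is orthogonal to `𝔥` if and only if there are `A, C ∈ 𝔰𝔭(W)` and
`B₀ ∈ End(W)` (with ω-adjoint `Bs`) such that `Y = -(A + C)` and
`Z (u₁, u₂) = (A u₁ + B₀ u₂, -B₀⋆ u₁ + C u₂)`. -/
theorem mem_h_perp_iff
    (W : Type*) [AddCommGroup W] [Module ℂ W] [FiniteDimensional ℂ W]
    (ω : W →ₗ[ℂ] W →ₗ[ℂ] ℂ)
    (hω_alt : ∀ u : W, ω u u = 0)
    (hω_nondeg : ∀ u : W, (∀ w : W, ω u w = 0) → u = 0)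
    (Y : W →ₗ[ℂ] W) (Z : W × W →ₗ[ℂ] W × W)
    (hY : ∀ u w : W, ω (Y u) w + ω u (Y w) = 0)
    (hZ : ∀ p q : W × W,
      (ω (Z p).1 q.1 + ω (Z p).2 q.2) + (ω p.1 (Z q).1 + ω p.2 (Z q).2) = 0) :
    (∀ T : W →ₗ[ℂ] W, (∀ u w : W, ω (T u) w + ω u (T w) = 0) →
        LinearMap.trace ℂ W (Y ∘ₗ T) +
          LinearMap.trace ℂ (W × W) (Z ∘ₗ (T.prodMap T)) = 0) ↔
      ∃ A C B₀ Bs : W →ₗ[ℂ] W,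
        (∀ u w : W, ω (A u) w + ω u (A w) = 0) ∧
        (∀ u w : W, ω (C u) w + ω u (C w) = 0) ∧
        (∀ u w : W, ω (B₀ u) w = ω u (Bs w)) ∧
        Y = -(A + C) ∧
        (∀ u₁ u₂ : W, Z (u₁, u₂) = (A u₁ + B₀ u₂, -(Bs u₁) + C u₂)) := by
  simp_rw [trace_comp_prodMap_self, ← map_add, ← add_comp]
  set A := fst ℂ W W ∘ₗ Z ∘ₗ inl ℂ W W
  set C := snd ℂ W W ∘ₗ Z ∘ₗ inr ℂ W W
  constructor
  · intro h
    have hA : ∀ u w : W, ω (A u) w + ω u (A w) = 0 := fun u w => by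
      simpa [A] using hZ (u, 0) (w, 0)
    have hC : ∀ u w : W, ω (C u) w + ω u (C w) = 0 := fun u w => by
      simpa [C] using hZ (0, u) (0, w)
    have hYAC : Y + (A + C) = 0 := by
      refine eq_zero_of_forall_trace_comp_eq_zero hω_alt hω_nondeg (fun u w => ?_) h
      simp only [LinearMap.add_apply, map_add]
      linear_combination hY u w + hA u w + hC u w
    refine ⟨A, C, fst ℂ W W ∘ₗ Z ∘ₗ inr ℂ W W, -(snd ℂ W W ∘ₗ Z ∘ₗ inl ℂ W W), hA, hC,
      fun u w => ?_, eq_neg_of_add_eq_zero_left hYAC, fun u₁ u₂ => ?_⟩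
    · simpa [eq_neg_iff_add_eq_zero] using hZ (0, u) (w, 0)
    · rw [prod_apply_eq_blocks Z, LinearMap.neg_apply, neg_neg]
  · rintro ⟨A', C', _, _, -, -, -, rfl, hZ'⟩ T -
    have hA' : A = A' := by ext; simp [A, hZ']
    have hC' : C = C' := by ext; simp [C, hZ']
    simp [hA', hC']
end

section
/- The set of pairs (Y, Z) ∈ 𝔥^⊥ such that Y has rank at most 1 and Z has rank at most 1 (i.e., (Y,Z) lies in the product of the closures of the minimal nilpotent orbits, which consist of the elements of rank at most one) is exactly the set of pairs ( −(a⊗a + b⊗b), Z_{a,b} ), where a, b ∈ W are linearly dependent vectors and Z_{a,b}(u₁, u₂) = ((a⊗a)u₁ + (a⊗b)u₂, (b⊗a)u₁ + (b⊗b)u₂). (The main computation of Appendix B of the paper.) -/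
/-!
A rank-one element of `𝔰𝔭` for a nondegenerate alternating form over `ℂ` is `s ⊗ s` for some
`s`: its range is a line `ℂ v`, skew-adjointness forces it to be `κ (v ⊗ v)`, and one takes
`s = √κ v`. So `Y = s ⊗ s` and `Z = t ⊗ t` with `t = (a, b)`. Testing orthogonality to `𝔥`
against `T = v ⊗ v` gives `ω(a,v)² + ω(b,v)² + ω(s,v)² = 0` for all `v`; polarizing and using
nondegeneracy, `a ⊗ a + b ⊗ b + s ⊗ s = 0`, i.e. `Y = -(a ⊗ a + b ⊗ b)`. For independent
`a, b` the range of `a ⊗ a + b ⊗ b` is all of `span {a, b}`, so `rank Y ≤ 1` forces `a, b` to be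
dependent. The converse is a direct computation.
-/

open Module

namespace LinearMap

variable {R M : Type*} [CommRing R] [AddCommGroup M] [Module R M]

theorem trace_smulRight_comp [Module.Free R M] [Module.Finite R M] (f : Dual R M) (x : M)
    (T : M →ₗ[R] M) : trace R M (f.smulRight x ∘ₗ T) = f (T x) := by
  rw [trace_comp_comm', show T ∘ₗ f.smulRight x = f.smulRight (T x) by ext; simp,
    trace_smulRight]

theorem range_sum_smulRight_le {ι : Type*} [Fintype ι] (f : ι → Dual R M) (v : ι → M) :
    range (∑ i, (f i).smulRight (v i)) ≤ Submodule.span R (Set.range v) := by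
  rintro _ ⟨u, rfl⟩
  simp only [LinearMap.sum_apply, smulRight_apply]
  exact Submodule.sum_mem _ fun i _ => Submodule.smul_mem _ _ (Submodule.subset_span ⟨i, rfl⟩)

theorem rank_smulRight_le_one {K V : Type*} [Field K] [AddCommGroup V] [Module K V]
    (f : Dual K V) (x : V) : (f.smulRight x).rank ≤ 1 :=
  (rank_submodule_le_one_iff' _).mpr ⟨x, by
    rintro _ ⟨u, rfl⟩
    exact Submodule.smul_mem _ _ (Submodule.mem_span_singleton_self x)⟩

end LinearMap

namespace LinearMap.BilinForm

variable {K V : Type*} [Field K] [AddCommGroup V] [Module K V] {ω : LinearMap.BilinForm K V}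

theorem isSkewAdjoint_iff_forall {X : V →ₗ[K] V} :
    ω.IsSkewAdjoint X ↔ ∀ u w, ω (X u) w + ω u (X w) = 0 := by
  simp only [IsSkewAdjoint, IsAdjointPair, Pi.neg_apply, map_neg, add_eq_zero_iff_eq_neg]

theorem isSkewAdjoint_smulRight_self (hω : ω.IsAlt) (s : V) :
    ω.IsSkewAdjoint ((ω s).smulRight s) := by
  intro u w
  simp only [Pi.neg_apply, smulRight_apply, map_smul, smul_apply, smul_eq_mul, map_neg,
    ← hω.neg_eq s u]
  ring

theorem exists_eq_smul_smulRight_of_range_le (hω : ω.IsAlt) (hsep : ω.SeparatingLeft)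
    {X : V →ₗ[K] V} (hX : ω.IsSkewAdjoint X) {v : V} (hv : range X ≤ K ∙ v) :
    ∃ κ : K, X = κ • (ω v).smulRight v := by
  have hc : ∀ u, ∃ c : K, c • v = X u := fun u =>
    Submodule.mem_span_singleton.mp (hv (mem_range_self X u))
  choose c hc using hc
  by_cases hv0 : v = 0
  · exact ⟨0, by ext u; simp [← hc, hv0]⟩
  obtain ⟨w₀, hw₀⟩ : ∃ w₀, ω v w₀ ≠ 0 := by
    by_contra! h
    exact hv0 (hsep v h)
  refine ⟨c w₀ / ω v w₀, ?_⟩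
  ext u
  have hsymm : ω (X u) w₀ = ω (X w₀) u := by
    rw [hX u w₀, Pi.neg_apply, map_neg, hω.neg_eq]
  rw [← hc, ← hc] at hsymm
  simp only [map_smul, smul_apply, smul_eq_mul] at hsymm
  simp only [← hc, smul_apply, smulRight_apply, smul_smul]
  congr 1
  field_simp
  linear_combination hsymm

theorem exists_eq_smulRight_self_of_rank_le_one [IsAlgClosed K] (hω : ω.IsAlt)
    (hsep : ω.SeparatingLeft) {X : V →ₗ[K] V} (hX : ω.IsSkewAdjoint X) (hr : X.rank ≤ 1) :
    ∃ s, X = (ω s).smulRight s := by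
  obtain ⟨v, hv⟩ := (rank_submodule_le_one_iff' (range X)).mp hr
  obtain ⟨κ, rfl⟩ := exists_eq_smul_smulRight_of_range_le hω hsep hX hv
  obtain ⟨ρ, hρ⟩ := IsAlgClosed.exists_pow_nat_eq κ two_pos
  refine ⟨ρ • v, ?_⟩
  ext u
  simp only [smul_apply, smulRight_apply, map_smul, smul_eq_mul, smul_smul, ← hρ]
  ring_nf

theorem sum_smulRight_self_eq_zero [NeZero (2 : K)] (hsep : ω.SeparatingLeft) {ι : Type*}
    [Fintype ι] (x : ι → V) (h : ∀ u, ∑ i, ω (x i) u ^ 2 = 0) :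
    ∑ i, (ω (x i)).smulRight (x i) = 0 := by
  ext u
  simp only [LinearMap.sum_apply, smulRight_apply]
  refine hsep _ fun w => ?_
  have h2 : 2 * ∑ i, ω (x i) u * ω (x i) w = 0 :=
    calc 2 * ∑ i, ω (x i) u * ω (x i) w
        = ∑ i, ω (x i) (u + w) ^ 2 - ∑ i, ω (x i) u ^ 2 - ∑ i, ω (x i) w ^ 2 := by
          simp only [map_add, add_sq, Finset.sum_add_distrib, Finset.mul_sum, mul_assoc]
          ring
      _ = 0 := by rw [h, h, h, sub_zero, sub_zero]
  simpa [map_sum, two_ne_zero] using h2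

theorem surjective_pi_of_linearIndependent (hsep : ω.SeparatingLeft) {ι : Type*} [Fintype ι]
    {v : ι → V} (hv : LinearIndependent K v) : Function.Surjective (pi fun i => ω (v i)) := by
  classical
  rw [← dualMap_injective_iff, ← ker_eq_bot, ker_eq_bot']
  intro g hg
  have hcomb : ∑ i, g (Pi.single i 1) • v i = 0 := hsep _ fun u => by
    have := congr($hg u)
    rw [dualMap_apply, pi_apply_eq_sum_univ g] at this
    have hsingle : ∀ i : ι, (fun j => if i = j then (1 : K) else 0) = Pi.single i 1 :=
      fun i => by ext j; simp [Pi.single_apply, eq_comm]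
    simpa [hsingle, map_sum, mul_comm] using this
  ext i
  simpa using Fintype.linearIndependent_iff.mp hv _ hcomb i

theorem range_sum_smulRight_self (hsep : ω.SeparatingLeft) {ι : Type*} [Fintype ι]
    {v : ι → V} (hv : LinearIndependent K v) :
    range (∑ i, (ω (v i)).smulRight (v i)) = Submodule.span K (Set.range v) := by
  have hfac : ∑ i, (ω (v i)).smulRight (v i) =
      Fintype.linearCombination K v ∘ₗ pi fun i => ω (v i) := by
    ext u
    simp [Fintype.linearCombination_apply]
  rw [hfac, range_comp_of_range_eq_top _ (range_eq_top.mpr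
    (surjective_pi_of_linearIndependent hsep hv)), Fintype.range_linearCombination]

theorem rank_smulRight_add_smulRight_le_one_iff (hsep : ω.SeparatingLeft) {a b : V} :
    ((ω a).smulRight a + (ω b).smulRight b).rank ≤ 1 ↔ ¬ LinearIndependent K ![a, b] := by
  have hsum : (ω a).smulRight a + (ω b).smulRight b =
      ∑ i, (ω (![a, b] i)).smulRight (![a, b] i) := by
    simp [Fin.sum_univ_two]
  rw [hsum]
  have : FiniteDimensional K (Submodule.span K (Set.range ![a, b])) :=
    FiniteDimensional.span_of_finite K (Set.finite_range ![a, b])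
  constructor
  · intro hr hab
    have h2 : Fintype.card (Fin 2) = finrank K (Submodule.span K (Set.range ![a, b])) :=
      linearIndependent_iff_card_eq_finrank_span.mp hab
    rw [LinearMap.rank, range_sum_smulRight_self hsep hab, ← finrank_eq_rank, ← h2] at hr
    norm_num at hr
  · intro hab
    have hspan : (Set.range ![a, b]).finrank K ≤ 1 := by
      have := finrank_range_le_card (R := K) ![a, b]
      have := mt linearIndependent_iff_card_eq_finrank_span.mpr hab
      simp only [Fintype.card_fin] at *
      omega
    calc LinearMap.rank _ ≤ Module.rank K (Submodule.span K (Set.range ![a, b])) :=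
          Submodule.rank_mono (range_sum_smulRight_le _ _)
      _ ≤ 1 := by rw [← finrank_eq_rank]; exact_mod_cast hspan

section Prod

variable {V₁ V₂ : Type*} [AddCommGroup V₁] [Module K V₁] [AddCommGroup V₂] [Module K V₂]

def prod (ω₁ : LinearMap.BilinForm K V₁) (ω₂ : LinearMap.BilinForm K V₂) :
    LinearMap.BilinForm K (V₁ × V₂) :=
  ω₁.compl₁₂ (fst K V₁ V₂) (fst K V₁ V₂) + ω₂.compl₁₂ (snd K V₁ V₂) (snd K V₁ V₂)

variable {ω₁ : LinearMap.BilinForm K V₁} {ω₂ : LinearMap.BilinForm K V₂}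

@[simp]
theorem prod_apply (p q : V₁ × V₂) : ω₁.prod ω₂ p q = ω₁ p.1 q.1 + ω₂ p.2 q.2 := rfl

theorem IsAlt.prod (h₁ : ω₁.IsAlt) (h₂ : ω₂.IsAlt) : (ω₁.prod ω₂).IsAlt := fun p => by
  simp [h₁.self_eq_zero, h₂.self_eq_zero]

theorem SeparatingLeft.prod (h₁ : ω₁.SeparatingLeft) (h₂ : ω₂.SeparatingLeft) :
    (ω₁.prod ω₂).SeparatingLeft := fun p hp =>
  Prod.ext (h₁ _ fun w => by simpa using hp (w, 0)) (h₂ _ fun w => by simpa using hp (0, w))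

theorem isSkewAdjoint_prod_iff_forall {Z : V₁ × V₂ →ₗ[K] V₁ × V₂} :
    (ω₁.prod ω₂).IsSkewAdjoint Z ↔ ∀ p q,
      (ω₁ (Z p).1 q.1 + ω₂ (Z p).2 q.2) + (ω₁ p.1 (Z q).1 + ω₂ p.2 (Z q).2) = 0 :=
  isSkewAdjoint_iff_forall

end Prod

end LinearMap.BilinForm

open LinearMap LinearMap.BilinForm in
/-- the elements of `𝔥^⊥ ⊆ 𝔤 = 𝔰𝔭(W) × 𝔰𝔭(W ⊕ W)` whose two components have
rank at most one (i.e. lie in the closures of the minimal nilpotent orbits) are exactly the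
pairs `(-(a⊗a + b⊗b), Z_{a,b})` with `a, b ∈ W` linearly dependent, where
`Z_{a,b}(u₁,u₂) = ((a⊗a)u₁ + (a⊗b)u₂, (b⊗a)u₁ + (b⊗b)u₂)` and `a⊗b : u ↦ ω b u • a`. -/
theorem h_perp_inter_min_orbits
    (W : Type*) [AddCommGroup W] [Module ℂ W] [FiniteDimensional ℂ W]
    (ω : W →ₗ[ℂ] W →ₗ[ℂ] ℂ)
    (hω_alt : ∀ u : W, ω u u = 0)
    (hω_nondeg : ∀ u : W, (∀ w : W, ω u w = 0) → u = 0)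
    (Y : W →ₗ[ℂ] W) (Z : W × W →ₗ[ℂ] W × W) :
    ((∀ u w : W, ω (Y u) w + ω u (Y w) = 0) ∧
     (∀ p q : W × W,
        (ω (Z p).1 q.1 + ω (Z p).2 q.2) + (ω p.1 (Z q).1 + ω p.2 (Z q).2) = 0) ∧
     (∀ T : W →ₗ[ℂ] W, (∀ u w : W, ω (T u) w + ω u (T w) = 0) →
        LinearMap.trace ℂ W (Y ∘ₗ T) +
          LinearMap.trace ℂ (W × W) (Z ∘ₗ (T.prodMap T)) = 0) ∧
     LinearMap.rank Y ≤ 1 ∧ LinearMap.rank Z ≤ 1) ↔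
      ∃ a b : W, ¬ LinearIndependent ℂ ![a, b] ∧
        Y = -((ω a).smulRight a + (ω b).smulRight b) ∧
        (∀ u₁ u₂ : W,
          Z (u₁, u₂) = (ω a u₁ • a + ω b u₂ • a, ω a u₁ • b + ω b u₂ • b)) := by
  have hω₂ : (BilinForm.prod ω ω).IsAlt := IsAlt.prod hω_alt hω_alt
  have hsep₂ : (BilinForm.prod ω ω).SeparatingLeft := SeparatingLeft.prod hω_nondeg hω_nondeg
  simp only [← isSkewAdjoint_prod_iff_forall, ← isSkewAdjoint_iff_forall]
  constructor
  · rintro ⟨hY, hZ, htr, hrY, hrZ⟩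
    obtain ⟨s, rfl⟩ := exists_eq_smulRight_self_of_rank_le_one hω_alt hω_nondeg hY hrY
    obtain ⟨⟨a, b⟩, rfl⟩ := exists_eq_smulRight_self_of_rank_le_one hω₂ hsep₂ hZ hrZ
    have hsq : ∀ v, ∑ i, ω (![a, b, s] i) v ^ 2 = 0 := fun v => by
      have := htr _ (isSkewAdjoint_smulRight_self hω_alt v)
      simp only [trace_smulRight_comp, coe_smulRight, map_smul, smul_eq_mul, prodMap_apply,
        BilinForm.prod_apply, ← LinearMap.IsAlt.neg hω_alt _ v] at this
      simp only [Fin.sum_univ_three, Matrix.cons_val]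
      linear_combination -this
    have hzero := sum_smulRight_self_eq_zero hω_nondeg _ hsq
    simp only [Fin.sum_univ_three, Matrix.cons_val] at hzero
    have hY : (ω s).smulRight s = -((ω a).smulRight a + (ω b).smulRight b) :=
      eq_neg_of_add_eq_zero_right hzero
    refine ⟨a, b, ?_, hY, fun u₁ u₂ => by simp [add_smul]⟩
    rwa [← rank_smulRight_add_smulRight_le_one_iff hω_nondeg, LinearMap.rank, ← range_neg,
      ← hY]
  · rintro ⟨a, b, hab, rfl, hZ⟩
    obtain rfl : Z = (BilinForm.prod ω ω (a, b)).smulRight (a, b) :=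
      LinearMap.ext fun ⟨u₁, u₂⟩ => by simp [hZ, add_smul]
    refine ⟨?_, isSkewAdjoint_smulRight_self hω₂ _, fun T _ => ?_, ?_, ?_⟩
    · have hsmul := fun x =>
        (mem_skewAdjointSubmodule _).mpr (isSkewAdjoint_smulRight_self hω_alt x)
      simpa using neg_mem (add_mem (hsmul a) (hsmul b))
    · simp [trace_smulRight_comp, neg_comp, add_comp]
    · rwa [LinearMap.rank, range_neg, ← LinearMap.rank,
        rank_smulRight_add_smulRight_le_one_iff hω_nondeg]
    · exact rank_smulRight_le_one _ _
end

section
/- Let 𝔲 be a finite-dimensional nilpotent complex Lie algebra and let M be a Lie module over 𝔲 such that the unital associative subalgebra of End_ℂ(M) generated by the action operators {m ↦ x · m : x ∈ 𝔲} is finite-dimensional (equivalently, the annihilator of M in U(𝔲) has finite codimension). Then the set of linear functionals χ : 𝔲 → ℂ for which the simultaneous eigenspace {v ∈ M : x · v = χ(x) · v for all x ∈ 𝔲} is nonzero is finite. (The finiteness of eigencharacters step in the proof of Proposition 4.4 of the paper.) -/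
/-!
If `v ≠ 0` is a common eigenvector of the operators `f x` with `f x v = χ x • v`, then `χ x` is an
eigenvalue of `f x`. Each `f x` lies in the finite-dimensional algebra generated by the `f x`, so
it is integral and has finitely many eigenvalues. Since `χ` vanishes on `ker f`, it factors through
`L ⧸ ker f ≃ range f`, which is finite-dimensional, and is determined by its finitely many possible
values on a basis of that quotient.
-/

namespace Module.End

variable {K M L : Type*} [Field K] [AddCommGroup M] [Module K M] [AddCommGroup L] [Module K L]

theorem finite_setOf_hasEigenvalue_of_isIntegral {T : End K M} (hT : IsIntegral K T) :
    {c | T.HasEigenvalue c}.Finite := by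
  obtain ⟨p, hp_monic, hp⟩ := hT
  refine (Polynomial.finite_setOfPred_isRoot hp_monic.ne_zero).subset fun c hc => ?_
  obtain ⟨v, hv⟩ := hc.exists_hasEigenvector
  have hpv : p.eval c • v = 0 := by
    rw [← aeval_apply_of_hasEigenvector hv, Polynomial.aeval_def, hp, LinearMap.zero_apply]
  exact (smul_eq_zero.1 hpv).resolve_right hv.2

def eigencharacters (f : L →ₗ[K] End K M) : Set (L →ₗ[K] K) :=
  {χ | ∃ v : M, v ≠ 0 ∧ ∀ x, f x v = χ x • v}

variable {f : L →ₗ[K] End K M} {χ : L →ₗ[K] K}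

theorem hasEigenvalue_of_mem_eigencharacters (hχ : χ ∈ eigencharacters f) (x : L) :
    (f x).HasEigenvalue (χ x) := by
  obtain ⟨v, hv, hfv⟩ := hχ
  exact hasEigenvalue_of_hasEigenvector ⟨mem_eigenspace_iff.2 (hfv x), hv⟩

theorem ker_le_ker_of_mem_eigencharacters (hχ : χ ∈ eigencharacters f) :
    LinearMap.ker f ≤ LinearMap.ker χ := by
  obtain ⟨v, hv, hfv⟩ := hχ
  intro x hx
  have : χ x • v = 0 := by rw [← hfv x, LinearMap.mem_ker.1 hx, LinearMap.zero_apply]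
  exact (smul_eq_zero.1 this).resolve_right hv

theorem eigencharacters_finite_of_finiteDimensional [FiniteDimensional K L]
    (hf : ∀ x, {c | (f x).HasEigenvalue c}.Finite) : (eigencharacters f).Finite := by
  let b := Module.finBasis K L
  have hb : Function.Injective fun (ψ : L →ₗ[K] K) i => ψ (b i) :=
    fun ψ ψ' h => b.ext fun i => congrFun h i
  refine ((Set.Finite.pi' fun i => hf (b i)).preimage hb.injOn).subset fun χ hχ i => ?_
  exact hasEigenvalue_of_mem_eigencharacters hχ (b i)

theorem eigencharacters_subset_image_liftQ :
    eigencharacters f ⊆ (fun ψ => ψ ∘ₗ (LinearMap.ker f).mkQ) ''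
      eigencharacters ((LinearMap.ker f).liftQ f le_rfl) := by
  intro χ hχ
  refine ⟨(LinearMap.ker f).liftQ χ (ker_le_ker_of_mem_eigencharacters hχ), ?_, by ext; rfl⟩
  obtain ⟨v, hv, hfv⟩ := hχ
  exact ⟨v, hv, fun q => Submodule.Quotient.induction_on _ q hfv⟩

theorem eigencharacters_finite
    (hf : FiniteDimensional K (Algebra.adjoin K (Set.range f))) : (eigencharacters f).Finite := by
  set A := Algebra.adjoin K (Set.range f)
  have hrange : LinearMap.range f ≤ Subalgebra.toSubmodule A := by
    rintro _ ⟨x, rfl⟩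
    exact Algebra.subset_adjoin ⟨x, rfl⟩
  have : FiniteDimensional K (LinearMap.range f) := Submodule.finiteDimensional_of_le hrange
  have : FiniteDimensional K (L ⧸ LinearMap.ker f) := f.quotKerEquivRange.symm.finiteDimensional
  refine (Set.Finite.image _ (eigencharacters_finite_of_finiteDimensional fun q => ?_)).subset
    eigencharacters_subset_image_liftQ
  obtain ⟨x, rfl⟩ := Submodule.Quotient.mk_surjective _ q
  exact finite_setOf_hasEigenvalue_of_isIntegral
    (.of_mem_of_fg A (Module.Finite.iff_fg.1 hf) _ (Algebra.subset_adjoin ⟨x, rfl⟩))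

end Module.End

theorem finite_eigencharacters_of_nilpotent_finite_action_general
    (𝔲 : Type*) [LieRing 𝔲] [LieAlgebra ℂ 𝔲]
    (M : Type*) [AddCommGroup M] [Module ℂ M] [LieRingModule 𝔲 M] [LieModule ℂ 𝔲 M]
    (hfin : FiniteDimensional ℂ
      (Algebra.adjoin ℂ (Set.range fun x : 𝔲 => (LieModule.toEnd ℂ 𝔲 M x : Module.End ℂ M)))) :
    {χ : 𝔲 →ₗ[ℂ] ℂ | ∃ v : M, v ≠ 0 ∧ ∀ x : 𝔲, ⁅x, v⁆ = χ x • v}.Finite :=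
  Module.End.eigencharacters_finite (f := (LieModule.toEnd ℂ 𝔲 M : 𝔲 →ₗ[ℂ] Module.End ℂ M)) hfin

/-- finiteness of eigencharacters in Proposition 4.4 of the paper: if a
finite-dimensional nilpotent complex Lie algebra `𝔲` acts on a module `M` so that the unital
associative subalgebra of `End ℂ M` generated by the action operators is finite-dimensional,
then only finitely many linear functionals `χ : 𝔲 → ℂ` admit a nonzero simultaneous
eigenvector. -/
theorem finite_eigencharacters_of_nilpotent_finite_action
    (𝔲 : Type*) [LieRing 𝔲] [LieAlgebra ℂ 𝔲] [FiniteDimensional ℂ 𝔲]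
    [LieRing.IsNilpotent 𝔲]
    (M : Type*) [AddCommGroup M] [Module ℂ M] [LieRingModule 𝔲 M] [LieModule ℂ 𝔲 M]
    (hfin : FiniteDimensional ℂ
      (Algebra.adjoin ℂ (Set.range fun x : 𝔲 => (LieModule.toEnd ℂ 𝔲 M x : Module.End ℂ M)))) :
    {χ : 𝔲 →ₗ[ℂ] ℂ | ∃ v : M, v ≠ 0 ∧ ∀ x : 𝔲, ⁅x, v⁆ = χ x • v}.Finite :=
  finite_eigencharacters_of_nilpotent_finite_action_general 𝔲 M hfin
end
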